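/- For n = 2, let B = diag(1, −1) and, for σ > 0, let A_σ be the 2×2 matrix with entries A_σ = [[1+σ, −σ], [−σ, 1+σ]], and define ν(σ) = (σ + 1 + √(2σ+1))/σ. Then: (i) for every σ > 0, the vector (ν(σ), 1)ᵀ is an eigenvector of A_σ^{-1}B associated with a positive eigenvalue; (ii) ν is strictly decreasing on (0, ∞) with ν(σ) > 1 for all σ > 0, ν(σ) → +∞ as σ → 0⁺, and ν(σ) → 1 as σ → ∞. In particular, for σ₁ ≠ σ₂ the corresponding eigenvectors (ν(σ₁), 1)ᵀ and (ν(σ₂), 1)ᵀ are not parallel and not orthogonal. -/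

import Mathlib

open Matrix

/-- The 2×2 Laplacian smoothing matrix `A_σ = [[1+σ, -σ], [-σ, 1+σ]]`. -/
noncomputable def A2 (σ : ℝ) : Matrix (Fin 2) (Fin 2) ℝ := !![1 + σ, -σ; -σ, 1 + σ]

/-- `B = diag(1, -1)`, corresponding to `f(x) = ½(x₁² - x₂²)`. -/
noncomputable def B2 : Matrix (Fin 2) (Fin 2) ℝ := !![1, 0; 0, -1]

/-- `ν(σ) = (σ + 1 + √(2σ+1))/σ`. -/
noncomputable def nufun (σ : ℝ) : ℝ := (σ + 1 + Real.sqrt (2 * σ + 1)) / σ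


lemma sqrt_gt_one {σ : ℝ} (hσ : 0 < σ) : 1 < Real.sqrt (2 * σ + 1) := by
  have := Real.sqrt_lt_sqrt (by norm_num : (0:ℝ) ≤ 1) (by linarith : (1:ℝ) < 2 * σ + 1)
  rwa [Real.sqrt_one] at this

lemma sqrt_sq' {σ : ℝ} (hσ : 0 < σ) : Real.sqrt (2 * σ + 1) ^ 2 = 2 * σ + 1 :=
  Real.sq_sqrt (by linarith)

lemma nufun_eq {σ : ℝ} (hσ : 0 < σ) :
    nufun σ = 1 + 2 / (Real.sqrt (2 * σ + 1) - 1) := by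
  have hs1 := sqrt_gt_one hσ
  have hs2 := sqrt_sq' hσ
  set s := Real.sqrt (2 * σ + 1)
  have h1 : s - 1 ≠ 0 := by linarith
  rw [nufun]
  field_simp
  have e : Real.sqrt (σ*2+1) = s := by
    show Real.sqrt (σ*2+1) = Real.sqrt (2*σ+1); rw [mul_comm]
  rw [e]
  nlinarith [hs2]

lemma nufun_gt_one {σ : ℝ} (hσ : 0 < σ) : 1 < nufun σ := by
  rw [nufun_eq hσ]
  have hs1 := sqrt_gt_one hσ
  have : 0 < 2 / (Real.sqrt (2 * σ + 1) - 1) := div_pos (by norm_num) (by linarith)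
  linarith

lemma A2_inv {σ : ℝ} (hσ : 0 < σ) :
    (A2 σ)⁻¹ = !![(1+σ)/(1+2*σ), σ/(1+2*σ); σ/(1+2*σ), (1+σ)/(1+2*σ)] := by
  apply Matrix.inv_eq_right_inv
  have hd : (1 + 2*σ) ≠ 0 := by linarith
  ext i j
  fin_cases i <;> fin_cases j <;>
    simp [A2, Matrix.mul_apply, Fin.sum_univ_two] <;> field_simp <;> ring

lemma eig {σ : ℝ} (hσ : 0 < σ) :
    ((A2 σ)⁻¹ * B2).mulVec ![nufun σ, 1]
      = (Real.sqrt (2*σ+1))⁻¹ • ![nufun σ, 1] := by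
  have hs1 := sqrt_gt_one hσ
  have hs2 := sqrt_sq' hσ
  have hd : (1 + 2*σ) ≠ 0 := by linarith
  have hsne : Real.sqrt (2*σ+1) ≠ 0 := by linarith
  rw [A2_inv hσ]
  funext i
  fin_cases i <;>
    simp [B2, Matrix.mulVec, Matrix.mul_apply, dotProduct, Fin.sum_univ_two,
      nufun]
  · field_simp
    rw [show σ*2+1 = 2*σ+1 by ring]
    linear_combination (1+σ) * hs2
  · field_simp
    rw [show σ*2+1 = 2*σ+1 by ring]
    linear_combination hs2

lemma strictAnti_nufun : StrictAntiOn nufun (Set.Ioi 0) := by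
  intro a ha b hb hab
  simp only [Set.mem_Ioi] at ha hb
  rw [nufun_eq ha, nufun_eq hb]
  have h1 := sqrt_gt_one ha
  have hlt : Real.sqrt (2*a+1) < Real.sqrt (2*b+1) :=
    Real.sqrt_lt_sqrt (by linarith) (by linarith)
  have : 2 / (Real.sqrt (2*b+1) - 1) < 2 / (Real.sqrt (2*a+1) - 1) :=
    div_lt_div_of_pos_left (by norm_num) (by linarith) (by linarith)
  linarith

theorem stmt15 :
    -- (i) for every `σ > 0`, `(ν(σ), 1)ᵀ` is an eigenvector of `A_σ⁻¹ B`
    -- associated with a positive eigenvalue: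
    (∀ σ : ℝ, 0 < σ → ∃ lam : ℝ, 0 < lam ∧
      ((A2 σ)⁻¹ * B2).mulVec ![nufun σ, 1] = lam • ![nufun σ, 1]) ∧
    -- (ii) `ν` is strictly decreasing on `(0, ∞)` with `ν(σ) > 1` for all `σ > 0`,
    StrictAntiOn nufun (Set.Ioi 0) ∧ (∀ σ : ℝ, 0 < σ → 1 < nufun σ) ∧
    -- `ν(σ) → +∞` as `σ → 0⁺` and `ν(σ) → 1` as `σ → ∞`:
    Filter.Tendsto nufun (nhdsWithin 0 (Set.Ioi 0)) Filter.atTop ∧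
    Filter.Tendsto nufun Filter.atTop (nhds 1) ∧
    -- in particular, for `σ₁ ≠ σ₂` the eigenvectors `(ν(σ₁), 1)ᵀ` and `(ν(σ₂), 1)ᵀ`
    -- are not parallel and not orthogonal:
    ∀ σ₁ σ₂ : ℝ, 0 < σ₁ → 0 < σ₂ → σ₁ ≠ σ₂ →
      (¬ ∃ c : ℝ, (![nufun σ₂, 1] : Fin 2 → ℝ) = c • ![nufun σ₁, 1]) ∧
      (![nufun σ₁, 1] : Fin 2 → ℝ) ⬝ᵥ ![nufun σ₂, 1] ≠ 0 := by
  refine ⟨?_, strictAnti_nufun, fun σ hσ => nufun_gt_one hσ, ?_, ?_, ?_⟩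
  · intro σ hσ
    exact ⟨(Real.sqrt (2*σ+1))⁻¹, inv_pos.2 (by linarith [sqrt_gt_one hσ]), eig hσ⟩
  · -- tendsto at 0+
    apply Filter.tendsto_atTop_mono' _ _ tendsto_inv_nhdsGT_zero
    filter_upwards [self_mem_nhdsWithin] with σ (hσ : σ ∈ Set.Ioi 0)
    simp only [Set.mem_Ioi] at hσ
    rw [nufun, inv_eq_one_div]
    gcongr
    nlinarith [Real.sqrt_nonneg (2*σ+1)]
  · -- tendsto at ∞
    have hsq : Filter.Tendsto (fun σ : ℝ => Real.sqrt (2*σ+1)) Filter.atTop Filter.atTop := by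
      apply Filter.tendsto_atTop_atTop.2
      intro b
      refine ⟨b^2, fun a ha => ?_⟩
      have hb : b ≤ Real.sqrt (b^2) := by
        rw [Real.sqrt_sq_eq_abs]; exact le_abs_self b
      exact hb.trans (Real.sqrt_le_sqrt (by nlinarith [sq_nonneg b]))
    have hsub : Filter.Tendsto (fun σ : ℝ => Real.sqrt (2*σ+1) - 1) Filter.atTop Filter.atTop :=
      Filter.tendsto_atTop_add_const_right _ (-1) hsq
    have h0 : Filter.Tendsto (fun σ : ℝ => 2 / (Real.sqrt (2*σ+1) - 1)) Filter.atTop (nhds 0) :=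
      Filter.Tendsto.div_atTop tendsto_const_nhds hsub
    have h1 : Filter.Tendsto (fun σ : ℝ => 1 + 2 / (Real.sqrt (2*σ+1) - 1))
        Filter.atTop (nhds 1) := by
      have := h0.const_add (1:ℝ)
      simpa using this
    apply h1.congr'
    filter_upwards [Filter.eventually_gt_atTop 0] with σ hσ
    exact (nufun_eq hσ).symm
  · intro σ₁ σ₂ h₁ h₂ hne
    have hνne : nufun σ₁ ≠ nufun σ₂ := fun h =>
      hne (strictAnti_nufun.injOn h₁ h₂ h)
    constructor
    · rintro ⟨c, hc⟩
      have h0 := congrFun hc 0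
      have h1 := congrFun hc 1
      simp at h0 h1
      rw [← h1] at h0
      simp at h0
      exact hνne h0.symm
    · have g1 := nufun_gt_one h₁
      have g2 := nufun_gt_one h₂
      simp [dotProduct, Fin.sum_univ_two]
      nlinarith
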